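/- In a project-join tree of a CNF formula φ, for every node n, the valuation satisfies f^W_n = ∃_{P(n)}(Φ(n) · W_{P(n)}): the recursively defined valuation at n equals the projection over P(n) of the product of all clauses in the subtree at n with the partial literal weights W_{P(n)}. -/

import Mathlib

variable {V : Type*} [DecidableEq V]

structure Clause (V : Type*) where
  pos : Finset V
  neg : Finset V

def Clause.vars [DecidableEq V] (c : Clause V) : Finset V := c.pos ∪ c.neg

noncomputable def Clause.ind [DecidableEq V] (c : Clause V) (τ : Finset V) : ℝ :=
  if (∃ x ∈ c.pos, x ∈ τ) ∨ (∃ x ∈ c.neg, x ∉ τ) then 1 else 0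

inductive PJT (V : Type*) where
  | leaf (c : Clause V)
  | node (lbl : Finset V) (children : List (PJT V))

namespace PJT

def clauses : PJT V → Multiset (Clause V)
  | .leaf c => {c}
  | .node _ cs => (cs.attach.map (fun o => clauses o.1)).sum
decreasing_by
  have := List.sizeOf_lt_of_mem o.2
  simp only [PJT.node.sizeOf_spec]
  omega

def labels : PJT V → Multiset (Finset V)
  | .leaf _ => 0
  | .node lbl cs => lbl ::ₘ (cs.attach.map (fun o => labels o.1)).sum
decreasing_by
  have := List.sizeOf_lt_of_mem o.2
  simp only [PJT.node.sizeOf_spec]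
  omega

def P : PJT V → Finset V
  | .leaf _ => ∅
  | .node lbl cs => lbl ∪ (cs.attach.map (fun o => P o.1)).foldr (· ∪ ·) ∅
decreasing_by
  have := List.sizeOf_lt_of_mem o.2
  simp only [PJT.node.sizeOf_spec]
  omega

def varsOf : PJT V → Finset V
  | .leaf c => c.vars
  | .node lbl cs => (cs.attach.map (fun o => varsOf o.1)).foldr (· ∪ ·) ∅ \ lbl
decreasing_by
  have := List.sizeOf_lt_of_mem o.2
  simp only [PJT.node.sizeOf_spec]
  omega

def size : PJT V → ℕ
  | .leaf c => c.vars.card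
  | .node lbl cs => (varsOf (.node lbl cs) ∪ lbl).card

def width : PJT V → ℕ
  | .leaf c => c.vars.card
  | .node lbl cs =>
      max (size (.node lbl cs)) ((cs.attach.map (fun o => width o.1)).foldr max 0)
decreasing_by
  have := List.sizeOf_lt_of_mem o.2
  simp only [PJT.node.sizeOf_spec]
  omega

def wProd (W : V → Bool → ℝ) (S : Finset V) (τ : Finset V) : ℝ :=
  ∏ x ∈ S, W x (decide (x ∈ τ))

noncomputable def val (W : V → Bool → ℝ) : PJT V → Finset V → ℝ
  | .leaf c => c.ind
  | .node lbl cs => fun τ =>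
      ∑ σ ∈ lbl.powerset,
        (cs.attach.map (fun o => val W o.1 ((τ ∪ σ) ∩ varsOf o.1))).prod
          * wProd W lbl (τ ∪ σ)
decreasing_by
  have := List.sizeOf_lt_of_mem o.2
  simp only [PJT.node.sizeOf_spec]
  omega

inductive Subtree : PJT V → PJT V → Prop
  | refl (t : PJT V) : Subtree t t
  | child {s c : PJT V} {lbl : Finset V} {cs : List (PJT V)} :
      c ∈ cs → Subtree s c → Subtree s (.node lbl cs)

end PJT

def Formula.vars (φ : Finset (Clause V)) : Finset V := φ.sup Clause.vars

def clausesVars (M : Multiset (Clause V)) : Finset V := (M.map Clause.vars).sup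

structure IsPJT (φ : Finset (Clause V)) (t : PJT V) : Prop where
  clauses_eq : t.clauses = φ.val
  cover : t.P = Formula.vars φ
  disjoint_labels : (t.labels.map Finset.card).sum = (Formula.vars φ).card
  descend : ∀ lbl cs, PJT.Subtree (.node lbl cs) t →
    ∀ c ∈ φ, ∀ x ∈ lbl, x ∈ c.vars → c ∈ PJT.clauses (.node lbl cs)


/-! Induction over the tree proves `val s τ = ∑ σ ⊆ P s, Φ(s) W_{P s} (τ ∪ σ)` for every `τ`
disjoint from `P s`, which is the form that passes to the children. At a node the children's
projected sets `P o` are disjoint from the node's label, from each other and from every variable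
the other children mention: labels are disjoint, each clause occurs once, and all clauses
mentioning a projected variable lie below the node projecting it. So a product of the children's
projected sums is one projected sum over the union of the `P o`, and the sum over the node's
label merges with it. -/

theorem Finset.mem_foldr_union {α : Type*} [DecidableEq α] {x : α} {l : List (Finset α)} :
    x ∈ l.foldr (· ∪ ·) ∅ ↔ ∃ s ∈ l, x ∈ s := by
  induction l with
  | nil => simp
  | cons a l ih => simp [ih]

theorem Finset.disjoint_foldr_union_right {ι α : Type*} [DecidableEq α] {s : Finset α}
    {l : List ι} {X : ι → Finset α} :
    Disjoint s ((l.map X).foldr (· ∪ ·) ∅) ↔ ∀ i ∈ l, Disjoint s (X i) := by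
  induction l with
  | nil => simp
  | cons i l ih => simp [ih]

theorem Finset.prod_foldr_union {ι α β : Type*} [DecidableEq α] [CommMonoid β]
    (l : List ι) (X : ι → Finset α) (f : α → β) (hl : l.Pairwise fun i j => Disjoint (X i) (X j)) :
    ∏ x ∈ (l.map X).foldr (· ∪ ·) ∅, f x = (l.map fun i => ∏ x ∈ X i, f x).prod := by
  induction l with
  | nil => simp
  | cons i l ih =>
    obtain ⟨hi, hl⟩ := List.pairwise_cons.mp hl
    simp [Finset.prod_union (Finset.disjoint_foldr_union_right.mpr hi), ih hl]

theorem Finset.sum_powerset_union {α β : Type*} [DecidableEq α] [AddCommMonoid β]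
    {X Y : Finset α} (h : Disjoint X Y) (f : Finset α → β) :
    ∑ ρ ∈ (X ∪ Y).powerset, f ρ = ∑ ρ₁ ∈ X.powerset, ∑ ρ₂ ∈ Y.powerset, f (ρ₁ ∪ ρ₂) := by
  have hsplit : ∀ ρ₁ ⊆ X, ∀ ρ₂ ⊆ Y, (ρ₁ ∪ ρ₂) ∩ X = ρ₁ ∧ (ρ₁ ∪ ρ₂) ∩ Y = ρ₂ := by
    intro ρ₁ h₁ ρ₂ h₂
    have h₁₂ := h.mono h₁ h₂
    constructor <;> ext x <;> simp only [Finset.mem_inter, Finset.mem_union] <;>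
      grind [Finset.disjoint_left]
  have hpowerset : (X ∪ Y).powerset = (X.powerset ×ˢ Y.powerset).image fun p => p.1 ∪ p.2 := by
    rw [Finset.powerset_union]; rfl
  rw [hpowerset, Finset.sum_image, Finset.sum_product]
  rintro ⟨ρ₁, ρ₂⟩ hρ ⟨ρ₁', ρ₂'⟩ hρ' heq
  simp only [Finset.coe_product, Set.mem_prod, Finset.mem_coe, Finset.mem_powerset] at hρ hρ'
  obtain ⟨e₁, e₂⟩ := hsplit _ hρ.1 _ hρ.2
  obtain ⟨e₁', e₂'⟩ := hsplit _ hρ'.1 _ hρ'.2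
  simp only at heq
  exact Prod.ext (e₁.symm.trans (heq ▸ e₁')) (e₂.symm.trans (heq ▸ e₂'))

theorem List.pairwise_add_le_sum_map {α β : Type*} (l : List α) (f : α → Multiset β) :
    l.Pairwise fun a b => f a + f b ≤ (l.map f).sum := by
  induction l with
  | nil => exact List.Pairwise.nil
  | cons a l ih =>
    refine List.pairwise_cons.mpr ⟨fun b hb => ?_, ih.imp fun h => h.trans ?_⟩
    · simpa using List.le_sum_of_mem (List.mem_map_of_mem (f := f) hb)
    · simp

theorem Multiset.prod_map_list_sum {ι α β : Type*} [CommMonoid β] (l : List ι)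
    (M : ι → Multiset α) (g : α → β) :
    ((l.map M).sum.map g).prod = (l.map fun i => ((M i).map g).prod).prod := by
  induction l with
  | nil => simp
  | cons i l ih => simp [ih]

theorem Multiset.mem_list_sum_map {ι α : Type*} {l : List ι} {M : ι → Multiset α} {a : α} :
    a ∈ (l.map M).sum ↔ ∃ i ∈ l, a ∈ M i := by
  induction l with
  | nil => simp
  | cons i l ih => simp [ih]

theorem Multiset.sup_list_sum_map {ι α : Type*} [DecidableEq α] (l : List ι)
    (M : ι → Multiset (Finset α)) :
    (l.map M).sum.sup = (l.map fun i => (M i).sup).foldr (· ∪ ·) ∅ := by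
  induction l with
  | nil => simp
  | cons i l ih => simp [ih, Finset.sup_eq_union]

theorem Multiset.card_sup_le_sum_card {α : Type*} [DecidableEq α] (M : Multiset (Finset α)) :
    M.sup.card ≤ (M.map Finset.card).sum := by
  induction M using Multiset.induction_on with
  | empty => simp
  | cons a M ih =>
    simpa [Finset.sup_eq_union] using (Finset.card_union_le a M.sup).trans (by omega)

theorem Multiset.disjoint_sup_of_sum_card_eq {α : Type*} [DecidableEq α]
    {M M₁ M₂ : Multiset (Finset α)} (hM : (M.map Finset.card).sum = M.sup.card)
    (h : M₁ + M₂ ≤ M) : Disjoint M₁.sup M₂.sup := by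
  obtain ⟨R, rfl⟩ := Multiset.le_iff_exists_add.mp h
  have h₁ := Multiset.card_sup_le_sum_card M₁
  have h₂ := Multiset.card_sup_le_sum_card M₂
  have hR := Multiset.card_sup_le_sum_card R
  have hunion := Finset.card_union_le (M₁.sup ∪ M₂.sup) R.sup
  have hinter := Finset.card_union_add_card_inter M₁.sup M₂.sup
  simp only [Multiset.map_add, Multiset.sum_add, Multiset.sup_add, Finset.sup_eq_union] at hM
  rw [Finset.disjoint_iff_inter_eq_empty, ← Finset.card_eq_zero]
  omega

def DependsOnly {α β : Type*} (f : Finset α → β) (D : Finset α) : Prop :=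
  ∀ ⦃τ₁ τ₂ : Finset α⦄, (∀ x ∈ D, x ∈ τ₁ ↔ x ∈ τ₂) → f τ₁ = f τ₂

namespace DependsOnly

variable {α β : Type*} {f g : Finset α → β} {D E : Finset α}

theorem mono (hf : DependsOnly f D) (hDE : D ⊆ E) : DependsOnly f E :=
  fun _ _ h => hf fun x hx => h x (hDE hx)

theorem mul [DecidableEq α] [Mul β] (hf : DependsOnly f D) (hg : DependsOnly g E) :
    DependsOnly (f * g) (D ∪ E) := fun _ _ h =>
  congrArg₂ (· * ·) (hf fun x hx => h x (Finset.mem_union_left _ hx))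
    (hg fun x hx => h x (Finset.mem_union_right _ hx))

theorem multiset_prod_map {ι : Type*} [CommMonoid β] {M : Multiset ι} {F : ι → Finset α → β}
    (hF : ∀ i ∈ M, DependsOnly (F i) D) : DependsOnly (fun τ => (M.map (F · τ)).prod) D :=
  fun _ _ h => congrArg Multiset.prod (Multiset.map_congr rfl fun i hi => hF i hi h)

theorem union_eq [DecidableEq α] (hf : DependsOnly f D) {X : Finset α} (hD : Disjoint D X)
    (τ : Finset α) {ρ : Finset α} (hρ : ρ ⊆ X) : f (τ ∪ ρ) = f τ :=
  hf fun x hx => by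
    have hxρ : x ∉ ρ := fun h => Finset.disjoint_left.mp hD hx (hρ h)
    simp [hxρ]

theorem inter_union_eq [DecidableEq α] {X Y : Finset α} (hf : DependsOnly f (Y ∪ X)) {A : Finset α}
    (hA : Disjoint A X) (ρ : Finset α) : f (A ∩ Y ∪ ρ) = f (A ∪ ρ) :=
  hf fun x hx => by
    have := Finset.disjoint_left.mp hA
    simp only [Finset.mem_union, Finset.mem_inter] at hx ⊢
    tauto

end DependsOnly

theorem Finset.sum_powerset_union_mul {α β : Type*} [DecidableEq α] [CommSemiring β]
    {X Y : Finset α} (hXY : Disjoint X Y) {f g : Finset α → β}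
    (hf : ∀ τ, ∀ ρ ⊆ Y, f (τ ∪ ρ) = f τ) (hg : ∀ τ, ∀ ρ ⊆ X, g (τ ∪ ρ) = g τ) (A : Finset α) :
    ∑ ρ ∈ (X ∪ Y).powerset, f (A ∪ ρ) * g (A ∪ ρ)
      = (∑ ρ ∈ X.powerset, f (A ∪ ρ)) * ∑ ρ ∈ Y.powerset, g (A ∪ ρ) := by
  rw [Finset.sum_powerset_union hXY, Finset.sum_mul_sum]
  refine Finset.sum_congr rfl fun ρ₁ hρ₁ => Finset.sum_congr rfl fun ρ₂ hρ₂ => ?_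
  rw [Finset.mem_powerset] at hρ₁ hρ₂
  rw [← Finset.union_assoc, hf _ _ hρ₂, Finset.union_right_comm, hg _ _ hρ₁]

theorem Finset.list_prod_map_sum_powerset {ι α β : Type*} [DecidableEq α] [CommSemiring β]
    (l : List ι) (X Y : ι → Finset α) (f : ι → Finset α → β)
    (hf : ∀ i ∈ l, DependsOnly (f i) (Y i ∪ X i))
    (hl : l.Pairwise fun i j => Disjoint (Y i ∪ X i) (X j) ∧ Disjoint (Y j ∪ X j) (X i))
    (A : Finset α) :
    (l.map fun i => ∑ ρ ∈ (X i).powerset, f i (A ∪ ρ)).prod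
      = ∑ ρ ∈ ((l.map X).foldr (· ∪ ·) ∅).powerset, (l.map fun i => f i (A ∪ ρ)).prod := by
  induction l with
  | nil => simp
  | cons i l ih =>
    obtain ⟨hi, hl⟩ := List.pairwise_cons.mp hl
    have hiQ : Disjoint (Y i ∪ X i) ((l.map X).foldr (· ∪ ·) ∅) :=
      Finset.disjoint_foldr_union_right.mpr fun j hj => (hi j hj).1
    rw [List.map_cons, List.prod_cons, ih (fun j hj => hf j (by simp [hj])) hl,
      ← Finset.sum_powerset_union_mul (g := fun τ => (l.map fun j => f j τ).prod)
        (hiQ.mono_left Finset.subset_union_right)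
        (fun τ ρ hρ => (hf i (by simp)).union_eq hiQ τ hρ)
        (fun τ ρ hρ => congrArg List.prod (List.map_congr_left fun j hj =>
          (hf j (by simp [hj])).union_eq (hi j hj).2 τ hρ))]
    simp

theorem Clause.dependsOnly_ind (c : Clause V) : DependsOnly c.ind c.vars := fun τ₁ τ₂ h => by
  unfold Clause.ind
  refine if_congr (or_congr ?_ ?_) rfl rfl
  · exact exists_congr fun x => and_congr_right fun hx => h x (Finset.mem_union_left _ hx)
  · exact exists_congr fun x => and_congr_right fun hx =>
      not_congr (h x (Finset.mem_union_right _ hx))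


namespace PJT

omit [DecidableEq V] in
@[elab_as_elim, induction_eliminator]
theorem induction {motive : PJT V → Prop} (leaf : ∀ c, motive (.leaf c))
    (node : ∀ lbl cs, (∀ o ∈ cs, motive o) → motive (.node lbl cs)) : ∀ t, motive t
  | .leaf c => leaf c
  | .node lbl cs => node lbl cs fun o _ => induction leaf node o
decreasing_by
  have := List.sizeOf_lt_of_mem ‹o ∈ cs›
  simp only [PJT.node.sizeOf_spec]
  omega

variable {lbl : Finset V} {cs : List (PJT V)}

omit [DecidableEq V] in
@[simp]
theorem clauses_node : (node lbl cs).clauses = (cs.map clauses).sum := by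
  rw [clauses, List.attach_map_val]

omit [DecidableEq V] in
@[simp]
theorem labels_node : (node lbl cs).labels = lbl ::ₘ (cs.map labels).sum := by
  rw [labels, List.attach_map_val]

@[simp]
theorem P_node : (node lbl cs).P = lbl ∪ (cs.map P).foldr (· ∪ ·) ∅ := by
  rw [P, List.attach_map_val]

@[simp]
theorem varsOf_node : (node lbl cs).varsOf = (cs.map varsOf).foldr (· ∪ ·) ∅ \ lbl := by
  rw [varsOf, List.attach_map_val]

theorem val_node (W : V → Bool → ℝ) (τ : Finset V) :
    (node lbl cs).val W τ = ∑ σ ∈ lbl.powerset,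
      (cs.map fun o => o.val W ((τ ∪ σ) ∩ o.varsOf)).prod * wProd W lbl (τ ∪ σ) := by
  rw [val]
  refine Finset.sum_congr rfl fun σ _ => ?_
  rw [List.attach_map_val (l := cs) (f := fun o => val W o ((τ ∪ σ) ∩ o.varsOf))]

omit [DecidableEq V] in
theorem Subtree.trans {a b c : PJT V} (h₁ : Subtree a b) (h₂ : Subtree b c) : Subtree a c := by
  induction h₂ with
  | refl => exact h₁
  | child hmem _ ih => exact Subtree.child hmem ih

omit [DecidableEq V] in
theorem Subtree.of_mem {o : PJT V} (ho : o ∈ cs) : Subtree o (node lbl cs) :=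
  Subtree.child ho (Subtree.refl o)

omit [DecidableEq V] in
theorem Subtree.clauses_le {s t : PJT V} (h : Subtree s t) : s.clauses ≤ t.clauses := by
  induction h with
  | refl => exact le_rfl
  | child hmem _ ih =>
    exact ih.trans (by simpa using List.le_sum_of_mem (List.mem_map_of_mem (f := clauses) hmem))

omit [DecidableEq V] in
theorem Subtree.labels_le {s t : PJT V} (h : Subtree s t) : s.labels ≤ t.labels := by
  induction h with
  | refl => exact le_rfl
  | child hmem _ ih =>
    refine ih.trans ((List.le_sum_of_mem (List.mem_map_of_mem (f := labels) hmem)).trans ?_)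
    simpa using Multiset.le_cons_self _ _

theorem Subtree.P_subset {s t : PJT V} (h : Subtree s t) : s.P ⊆ t.P := by
  induction h with
  | refl => exact subset_rfl
  | child hmem _ ih =>
    refine ih.trans fun x hx => ?_
    simpa [Finset.mem_foldr_union] using Or.inr ⟨_, hmem, hx⟩

theorem P_eq_sup_labels (s : PJT V) : s.P = s.labels.sup := by
  induction s with
  | leaf c => simp [P, labels]
  | node lbl cs ih =>
    rw [P_node, labels_node, Multiset.sup_cons, Multiset.sup_list_sum_map,
      List.map_congr_left ih, Finset.sup_eq_union]

theorem vars_subset_varsOf_union_P {s : PJT V} {c : Clause V} (hc : c ∈ s.clauses) :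
    c.vars ⊆ s.varsOf ∪ s.P := by
  induction s with
  | leaf c' =>
    obtain rfl : c = c' := by simpa [clauses] using hc
    simp [varsOf]
  | node lbl cs ih =>
    obtain ⟨o, ho, hco⟩ : ∃ o ∈ cs, c ∈ o.clauses := by simpa [Multiset.mem_list_sum_map] using hc
    intro x hx
    have := ih o ho hco hx
    simp only [varsOf_node, P_node, Finset.mem_union, Finset.mem_sdiff, Finset.mem_foldr_union,
      List.mem_map] at this ⊢
    grind

theorem exists_mem_clauses_of_mem_varsOf {s : PJT V} {x : V} (hx : x ∈ s.varsOf) :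
    ∃ c ∈ s.clauses, x ∈ c.vars := by
  induction s with
  | leaf c => exact ⟨c, by simp [clauses], by simpa [varsOf] using hx⟩
  | node lbl cs ih =>
    simp only [varsOf_node, Finset.mem_sdiff, Finset.mem_foldr_union, List.mem_map] at hx
    obtain ⟨⟨_, ⟨o, ho, rfl⟩, hxo⟩, -⟩ := hx
    obtain ⟨c, hc, hxc⟩ := ih o ho hxo
    exact ⟨c, by simpa [Multiset.mem_list_sum_map] using ⟨o, ho, hc⟩, hxc⟩

theorem exists_subtree_of_mem_P {s : PJT V} {x : V} (hx : x ∈ s.P) :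
    ∃ lbl cs, Subtree (node lbl cs) s ∧ x ∈ lbl := by
  induction s with
  | leaf c => simp [P] at hx
  | node lbl cs ih =>
    simp only [P_node, Finset.mem_union, Finset.mem_foldr_union, List.mem_map] at hx
    obtain hx | ⟨_, ⟨o, ho, rfl⟩, hxo⟩ := hx
    · exact ⟨lbl, cs, Subtree.refl _, hx⟩
    · obtain ⟨lbl', cs', hsub, hxl⟩ := ih o ho hxo
      exact ⟨lbl', cs', Subtree.child ho hsub, hxl⟩

theorem dependsOnly_wProd (W : V → Bool → ℝ) (S : Finset V) : DependsOnly (wProd W S) S :=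
  fun _ _ h => Finset.prod_congr rfl fun x hx => by rw [decide_eq_decide.mpr (h x hx)]

/-- `Φ(s) · W_{P(s)}` in the paper's notation. -/
noncomputable def weightedClauses (W : V → Bool → ℝ) (s : PJT V) (τ : Finset V) : ℝ :=
  (s.clauses.map fun c => c.ind τ).prod * wProd W s.P τ

theorem dependsOnly_weightedClauses (W : V → Bool → ℝ) (s : PJT V) :
    DependsOnly (s.weightedClauses W) (s.varsOf ∪ s.P) :=
  ((DependsOnly.multiset_prod_map (D := s.varsOf ∪ s.P) fun c hc =>
      c.dependsOnly_ind.mono (vars_subset_varsOf_union_P hc)).mul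
    (dependsOnly_wProd W s.P)).mono (by simp)

end PJT

namespace IsPJT

open PJT

variable {φ : Finset (Clause V)} {t s : PJT V} {lbl : Finset V} {cs : List (PJT V)}

theorem mem_clauses_of_mem_P (ht : IsPJT φ t) (hs : Subtree s t) {x : V} (hx : x ∈ s.P)
    {c : Clause V} (hc : c ∈ φ) (hxc : x ∈ c.vars) : c ∈ s.clauses := by
  obtain ⟨lbl, cs, hsub, hxl⟩ := exists_subtree_of_mem_P hx
  exact Multiset.mem_of_le hsub.clauses_le (ht.descend lbl cs (hsub.trans hs) c hc x hxl hxc)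

theorem exists_mem_clauses_of_mem_P (ht : IsPJT φ t) (hs : Subtree s t) {x : V}
    (hx : x ∈ s.P) : ∃ c ∈ s.clauses, x ∈ c.vars := by
  have hxφ : x ∈ Formula.vars φ := ht.cover ▸ hs.P_subset hx
  obtain ⟨c, hc, hxc⟩ := Finset.mem_sup.mp hxφ
  exact ⟨c, ht.mem_clauses_of_mem_P hs hx hc hxc, hxc⟩

theorem disjoint_of_disjoint_clauses (ht : IsPJT φ t) {s₁ s₂ : PJT V} (h₁ : Subtree s₁ t)
    (h₂ : Subtree s₂ t) (hd : Disjoint s₁.clauses s₂.clauses) :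
    Disjoint (s₁.varsOf ∪ s₁.P) s₂.P := by
  refine Finset.disjoint_left.mpr fun x hx hx₂ => ?_
  obtain ⟨c, hc, hxc⟩ : ∃ c ∈ s₁.clauses, x ∈ c.vars := by
    rcases Finset.mem_union.mp hx with hx | hx
    · exact exists_mem_clauses_of_mem_varsOf hx
    · exact ht.exists_mem_clauses_of_mem_P h₁ hx
  have hcφ : c ∈ φ := by
    have := Multiset.mem_of_le h₁.clauses_le hc
    rwa [ht.clauses_eq, Finset.mem_val] at this
  exact Multiset.disjoint_left.mp hd hc (ht.mem_clauses_of_mem_P h₂ hx₂ hcφ hxc)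

theorem pairwise_disjoint_clauses (ht : IsPJT φ t) (hs : Subtree (node lbl cs) t) :
    cs.Pairwise fun o o' => Disjoint o.clauses o'.clauses := by
  have hnodup : (cs.map clauses).sum.Nodup := by
    refine Multiset.nodup_of_le (by simpa using hs.clauses_le) ?_
    rw [ht.clauses_eq]
    exact φ.nodup
  exact (List.pairwise_add_le_sum_map cs clauses).imp fun hle =>
    (Multiset.nodup_add.mp (Multiset.nodup_of_le hle hnodup)).2.2

theorem pairwise_children (ht : IsPJT φ t) (hs : Subtree (node lbl cs) t) :
    cs.Pairwise fun o o' =>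
      Disjoint (o.varsOf ∪ o.P) o'.P ∧ Disjoint (o'.varsOf ∪ o'.P) o.P := by
  have hchild : ∀ o ∈ cs, Subtree o t := fun o ho => (Subtree.of_mem ho).trans hs
  exact (ht.pairwise_disjoint_clauses hs).imp_of_mem fun ho ho' hd =>
    ⟨ht.disjoint_of_disjoint_clauses (hchild _ ho) (hchild _ ho') hd,
      ht.disjoint_of_disjoint_clauses (hchild _ ho') (hchild _ ho) hd.symm⟩

theorem disjoint_label_P (ht : IsPJT φ t) (hs : Subtree (node lbl cs) t) {o : PJT V}
    (ho : o ∈ cs) : Disjoint lbl o.P := by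
  have hcard : (t.labels.map Finset.card).sum = t.labels.sup.card := by
    rw [ht.disjoint_labels, ← ht.cover, P_eq_sup_labels]
  have hle : {lbl} + o.labels ≤ t.labels := by
    refine le_trans ?_ hs.labels_le
    rw [labels_node, Multiset.singleton_add]
    exact Multiset.cons_le_cons _ (List.le_sum_of_mem (List.mem_map_of_mem (f := labels) ho))
  simpa [P_eq_sup_labels] using Multiset.disjoint_sup_of_sum_card_eq hcard hle

theorem disjoint_varsOf_P (ht : IsPJT φ t) (hs : Subtree s t) : Disjoint s.varsOf s.P := by
  induction s with
  | leaf c => simp [P]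
  | node lbl cs ih =>
    have hchild : ∀ o ∈ cs, Subtree o t := fun o ho => (Subtree.of_mem ho).trans hs
    refine Finset.disjoint_left.mpr fun x hxV hxP => ?_
    simp only [varsOf_node, P_node, Finset.mem_sdiff, Finset.mem_union, Finset.mem_foldr_union,
      List.mem_map] at hxV hxP
    obtain ⟨⟨_, ⟨o, ho, rfl⟩, hxo⟩, hxl⟩ := hxV
    obtain hx | ⟨_, ⟨o', ho', rfl⟩, hxo'⟩ := hxP
    · exact hxl hx
    by_cases hoo' : o = o'
    · subst hoo'
      exact Finset.disjoint_left.mp (ih o ho (hchild o ho)) hxo hxo'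
    · have hd := (ht.pairwise_disjoint_clauses hs).forall ho ho' hoo'
      exact Finset.disjoint_left.mp (ht.disjoint_of_disjoint_clauses (hchild o ho)
        (hchild o' ho') hd) (Finset.mem_union_left _ hxo) hxo'

theorem weightedClauses_node (ht : IsPJT φ t) (hs : Subtree (node lbl cs) t)
    (W : V → Bool → ℝ) (τ : Finset V) :
    (node lbl cs).weightedClauses W τ
      = (cs.map fun o => o.weightedClauses W τ).prod * wProd W lbl τ := by
  have hlblQ : Disjoint lbl ((cs.map P).foldr (· ∪ ·) ∅) :=
    Finset.disjoint_foldr_union_right.mpr fun o ho => ht.disjoint_label_P hs ho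
  have hP : cs.Pairwise fun o o' => Disjoint o.P o'.P :=
    (ht.pairwise_children hs).imp fun h => h.1.mono_left Finset.subset_union_right
  simp only [weightedClauses, wProd, clauses_node, P_node, Finset.prod_union hlblQ,
    Finset.prod_foldr_union cs P _ hP, Multiset.prod_map_list_sum, List.prod_map_mul]
  ring

theorem prod_val_children_eq_sum_powerset (ht : IsPJT φ t) (hs : Subtree (node lbl cs) t)
    (W : V → Bool → ℝ)
    (ih : ∀ o ∈ cs, ∀ τ, Disjoint τ o.P →
      o.val W τ = ∑ ρ ∈ o.P.powerset, o.weightedClauses W (τ ∪ ρ))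
    {A : Finset V} (hA : ∀ o ∈ cs, Disjoint A o.P) :
    (cs.map fun o => o.val W (A ∩ o.varsOf)).prod
      = ∑ ρ ∈ ((cs.map P).foldr (· ∪ ·) ∅).powerset,
          (cs.map fun o => o.weightedClauses W (A ∪ ρ)).prod := by
  rw [← Finset.list_prod_map_sum_powerset cs P varsOf (fun o => o.weightedClauses W)
    (fun o _ => dependsOnly_weightedClauses W o) (ht.pairwise_children hs)]
  refine congrArg List.prod (List.map_congr_left fun o ho => ?_)
  have hAo : Disjoint (A ∩ o.varsOf) o.P :=
    (ht.disjoint_varsOf_P ((Subtree.of_mem ho).trans hs)).mono_left Finset.inter_subset_right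
  rw [ih o ho _ hAo]
  exact Finset.sum_congr rfl fun ρ _ =>
    (dependsOnly_weightedClauses W o).inter_union_eq (hA o ho) ρ

theorem val_node_eq_sum_powerset (ht : IsPJT φ t) (hs : Subtree (node lbl cs) t)
    (W : V → Bool → ℝ)
    (ih : ∀ o ∈ cs, ∀ τ, Disjoint τ o.P →
      o.val W τ = ∑ ρ ∈ o.P.powerset, o.weightedClauses W (τ ∪ ρ))
    {τ : Finset V} (hτ : Disjoint τ (node lbl cs).P) :
    (node lbl cs).val W τ = ∑ σ ∈ (node lbl cs).P.powerset,
      (node lbl cs).weightedClauses W (τ ∪ σ) := by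
  set Q := (cs.map P).foldr (· ∪ ·) ∅
  have hlblQ : Disjoint lbl Q :=
    Finset.disjoint_foldr_union_right.mpr fun o ho => ht.disjoint_label_P hs ho
  rw [P_node] at hτ ⊢
  have hτQ : Disjoint τ Q := (Finset.disjoint_union_right.mp hτ).2
  have hA : ∀ σ ⊆ lbl, ∀ o ∈ cs, Disjoint (τ ∪ σ) o.P := fun σ hσ o ho =>
    Finset.disjoint_union_left.mpr
      ⟨Finset.disjoint_foldr_union_right.mp hτQ o ho, (ht.disjoint_label_P hs ho).mono_left hσ⟩
  calc (node lbl cs).val W τ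
      = ∑ σ ∈ lbl.powerset, (cs.map fun o => o.val W ((τ ∪ σ) ∩ o.varsOf)).prod
          * wProd W lbl (τ ∪ σ) := val_node W τ
    _ = ∑ σ ∈ lbl.powerset, ∑ ρ ∈ Q.powerset,
          (cs.map fun o => o.weightedClauses W (τ ∪ σ ∪ ρ)).prod * wProd W lbl (τ ∪ σ ∪ ρ) := by
      refine Finset.sum_congr rfl fun σ hσ => ?_
      rw [ht.prod_val_children_eq_sum_powerset hs W ih (hA σ (Finset.mem_powerset.mp hσ)),
        Finset.sum_mul]
      refine Finset.sum_congr rfl fun ρ hρ => ?_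
      rw [(dependsOnly_wProd W lbl).union_eq hlblQ _ (Finset.mem_powerset.mp hρ)]
    _ = ∑ σ ∈ (lbl ∪ Q).powerset, (node lbl cs).weightedClauses W (τ ∪ σ) := by
      simp only [Finset.sum_powerset_union hlblQ, ht.weightedClauses_node hs, Finset.union_assoc]

theorem val_eq_sum_powerset (ht : IsPJT φ t) (W : V → Bool → ℝ) (hs : Subtree s t)
    {τ : Finset V} (hτ : Disjoint τ s.P) :
    s.val W τ = ∑ σ ∈ s.P.powerset, s.weightedClauses W (τ ∪ σ) := by
  induction s generalizing τ with
  | leaf c => simp [val, weightedClauses, wProd, P, clauses]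
  | node lbl cs ih =>
    exact ht.val_node_eq_sum_powerset hs W
      (fun o ho _ hτo => ih o ho ((Subtree.of_mem ho).trans hs) hτo) hτ

end IsPJT

/-- In a project-join tree of `φ`, for every node `n` the valuation satisfies
`f^W_n = ∃_{P(n)} (Φ(n) · W_{P(n)})` as functions on `2^(vars(n))`. -/
theorem pjt_valuation {V : Type*} [DecidableEq V]
    (φ : Finset (Clause V)) (t : PJT V) (h : IsPJT φ t)
    (W : V → Bool → ℝ) (s : PJT V) (hs : PJT.Subtree s t)
    (τ : Finset V) (hτ : τ ⊆ s.varsOf) :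
    s.val W τ = ∑ σ ∈ s.P.powerset,
      (s.clauses.map (fun c => c.ind (τ ∪ σ))).prod * PJT.wProd W s.P (τ ∪ σ) :=
  h.val_eq_sum_powerset W hs (Finset.disjoint_of_subset_left hτ (h.disjoint_varsOf_P hs))
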